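/- arXiv:1705.06061 — 4 statements merged into one kernel-verified Lean document; each statement's English description precedes it below -/
import Mathlib

section
/- Let $z \in H^1(\mathbb{T}^d)$ and let $a : \mathbb{T}^d \to \mathbb{R}$ be a nonnegative measurable function with $M := \int_{\mathbb{T}^d} a\,dx > 0$. Then $\|z\|_{L^2} \leq \frac{1}{M}\left|\int_{\mathbb{T}^d} a z\,dx\right| + \left(1 + \frac{1}{M}\|M - a\|_{L^2}\right)\|\nabla z\|_{L^2}$. -/
open MeasureTheory

/-- Cauchy–Schwarz for real integrals. -/
lemma integral_cauchy_schwarz {Ω : Type*} [MeasurableSpace Ω] (μ : Measure Ω)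
    (f g : Ω → ℝ)
    (hf2 : Integrable (fun x => (f x) ^ 2) μ)
    (hg2 : Integrable (fun x => (g x) ^ 2) μ)
    (hfg : Integrable (fun x => f x * g x) μ) :
    |∫ x, f x * g x ∂μ| ≤ Real.sqrt (∫ x, (f x) ^ 2 ∂μ) * Real.sqrt (∫ x, (g x) ^ 2 ∂μ) := by
  set A := ∫ x, (f x) ^ 2 ∂μ with hA
  set B := ∫ x, (g x) ^ 2 ∂μ with hB
  set C := ∫ x, f x * g x ∂μ with hC
  have hA0 : 0 ≤ A := integral_nonneg fun x => sq_nonneg _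
  have hB0 : 0 ≤ B := integral_nonneg fun x => sq_nonneg _
  have key : ∀ t : ℝ, 0 ≤ A * (t * t) + (-2 * C) * t + B := by
    intro t
    have i1 : Integrable (fun x => (t * t) * (f x) ^ 2 - (2 * t) * (f x * g x)) μ :=
      (hf2.const_mul _).sub (hfg.const_mul _)
    have h0 : 0 ≤ ∫ x, (t * f x - g x) ^ 2 ∂μ := integral_nonneg fun x => sq_nonneg _
    have heq : (fun x => (t * f x - g x) ^ 2)
        = fun x => ((t * t) * (f x) ^ 2 - (2 * t) * (f x * g x)) + (g x) ^ 2 := by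
      funext x; ring
    rw [heq, integral_add i1 hg2, integral_sub (hf2.const_mul _) (hfg.const_mul _),
      integral_const_mul, integral_const_mul] at h0
    nlinarith [h0]
  have hd := discrim_le_zero key
  rw [discrim] at hd
  have hCsq : C ^ 2 ≤ A * B := by nlinarith [hd]
  calc |C| = Real.sqrt (C ^ 2) := (Real.sqrt_sq_eq_abs C).symm
    _ ≤ Real.sqrt (A * B) := Real.sqrt_le_sqrt hCsq
    _ = Real.sqrt A * Real.sqrt B := Real.sqrt_mul hA0 _

/-- Weighted Poincaré inequality on the torus (modelled as a probability space,
the gradient `gz` being linked to `z` through the classical Poincaré inequality,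
which may be used by assumption):
`‖z‖₂ ≤ (1/M)|∫ a z| + (1 + ‖M - a‖₂/M) ‖∇z‖₂` for nonnegative `a` with mass `M > 0`. -/
theorem stmt0
    {Ω : Type*} [MeasurableSpace Ω] (μ : Measure Ω) [IsProbabilityMeasure μ]
    {F : Type*} [NormedAddCommGroup F]
    (z : Ω → ℝ) (gz : Ω → F) (a : Ω → ℝ) (M : ℝ)
    (ha_meas : Measurable a) (ha_nonneg : ∀ x, 0 ≤ a x)
    (hM : M = ∫ x, a x ∂μ) (hMpos : 0 < M)
    (hz : Integrable z μ)
    (hz2 : Integrable (fun x => (z x) ^ 2) μ)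
    (haz : Integrable (fun x => a x * z x) μ)
    (haM2 : Integrable (fun x => (M - a x) ^ 2) μ)
    (hg2 : Integrable (fun x => ‖gz x‖ ^ 2) μ)
    (hPoincare : Real.sqrt (∫ x, (z x - ∫ y, z y ∂μ) ^ 2 ∂μ)
        ≤ Real.sqrt (∫ x, ‖gz x‖ ^ 2 ∂μ)) :
    Real.sqrt (∫ x, (z x) ^ 2 ∂μ)
      ≤ (1 / M) * |∫ x, a x * z x ∂μ|
        + (1 + (1 / M) * Real.sqrt (∫ x, (M - a x) ^ 2 ∂μ))
          * Real.sqrt (∫ x, ‖gz x‖ ^ 2 ∂μ) := by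
  set m : ℝ := ∫ y, z y ∂μ with hm
  -- integrability facts
  have hw : Integrable (fun x => z x - m) μ := hz.sub (integrable_const m)
  have hw2 : Integrable (fun x => (z x - m) ^ 2) μ := by
    have h : (fun x => (z x - m) ^ 2) = fun x => ((z x) ^ 2 - (2 * m) * z x) + m ^ 2 := by
      funext x; ring
    rw [h]
    exact (hz2.sub (hz.const_mul _)).add (integrable_const _)
  have haMmeas : AEStronglyMeasurable (fun x => M - a x) μ :=
    (measurable_const.sub ha_meas).aestronglyMeasurable
  have haM2' : Integrable (fun x => (M - a x) ^ 2 + 1) μ := haM2.add (integrable_const 1)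
  have haM1 : Integrable (fun x => M - a x) μ := by
    refine haM2'.mono haMmeas (Filter.Eventually.of_forall fun x => ?_)
    have h1 : (0:ℝ) ≤ (M - a x) ^ 2 + 1 := by positivity
    rw [Real.norm_eq_abs, Real.norm_eq_abs, abs_of_nonneg h1]
    nlinarith [sq_abs (M - a x), sq_nonneg (|M - a x| - 1)]
  have haMz : Integrable (fun x => M * z x - a x * z x) μ := (hz.const_mul M).sub haz
  have haMw : Integrable (fun x => (M - a x) * (z x - m)) μ := by
    have h : (fun x => (M - a x) * (z x - m))
        = fun x => (M * z x - a x * z x) - m * (M - a x) := by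
      funext x; ring
    rw [h]
    exact haMz.sub (haM1.const_mul m)
  -- abbreviations
  set W : ℝ := Real.sqrt (∫ x, (z x - m) ^ 2 ∂μ) with hW
  set G : ℝ := Real.sqrt (∫ x, ‖gz x‖ ^ 2 ∂μ) with hG
  set B : ℝ := Real.sqrt (∫ x, (M - a x) ^ 2 ∂μ) with hB
  set A : ℝ := |∫ x, a x * z x ∂μ| with hA
  have hW0 : 0 ≤ W := Real.sqrt_nonneg _
  have hB0 : 0 ≤ B := Real.sqrt_nonneg _
  have hG0 : 0 ≤ G := Real.sqrt_nonneg _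
  have hA0 : 0 ≤ A := abs_nonneg _
  -- ∫ (z - m) = 0
  have hint_w : ∫ x, (z x - m) ∂μ = 0 := by
    rw [integral_sub hz (integrable_const m), integral_const]
    simp [hm]
  -- orthogonality: ∫ z² = ∫ (z-m)² + m²
  have horth : ∫ x, (z x) ^ 2 ∂μ = (∫ x, (z x - m) ^ 2 ∂μ) + m ^ 2 := by
    have i1 : Integrable (fun x => (z x - m) ^ 2 + (2 * m) * (z x - m)) μ :=
      hw2.add (hw.const_mul _)
    have h : (fun x => (z x) ^ 2)
        = fun x => ((z x - m) ^ 2 + (2 * m) * (z x - m)) + m ^ 2 := by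
      funext x; ring
    rw [h, integral_add i1 (integrable_const _), integral_add hw2 (hw.const_mul _),
      integral_const_mul, hint_w, integral_const]
    simp
  -- step: sqrt(∫ z²) ≤ W + |m|
  have hWm2 : 0 ≤ ∫ x, (z x - m) ^ 2 ∂μ := integral_nonneg fun x => sq_nonneg _
  have hstep : Real.sqrt (∫ x, (z x) ^ 2 ∂μ) ≤ W + |m| := by
    rw [horth]
    have h1 : (∫ x, (z x - m) ^ 2 ∂μ) + m ^ 2 ≤ (W + |m|) ^ 2 := by
      have hWsq : W ^ 2 = ∫ x, (z x - m) ^ 2 ∂μ := Real.sq_sqrt hWm2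
      nlinarith [sq_abs m, mul_nonneg hW0 (abs_nonneg m)]
    calc Real.sqrt ((∫ x, (z x - m) ^ 2 ∂μ) + m ^ 2) ≤ Real.sqrt ((W + |m|) ^ 2) :=
          Real.sqrt_le_sqrt h1
      _ = W + |m| := Real.sqrt_sq (by positivity)
  -- a is integrable
  have ha1 : Integrable a μ := by
    have h : Integrable (fun x => M - (M - a x)) μ := (integrable_const M).sub haM1
    simpa using h
  have hint_aM : ∫ x, (M - a x) ∂μ = 0 := by
    rw [integral_sub (integrable_const M) ha1, integral_const]
    simp [← hM]
  -- key identity: M * m = ∫ a z + ∫ (M - a)(z - m)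
  have hkey : M * m = (∫ x, a x * z x ∂μ) + ∫ x, (M - a x) * (z x - m) ∂μ := by
    have h : (fun x => (M - a x) * (z x - m))
        = fun x => (M * z x - a x * z x) - m * (M - a x) := by
      funext x; ring
    rw [h, integral_sub haMz (haM1.const_mul m),
      integral_sub (hz.const_mul M) haz, integral_const_mul, integral_const_mul, hint_aM]
    ring
  -- Cauchy–Schwarz
  have hCS : |∫ x, (M - a x) * (z x - m) ∂μ| ≤ B * W :=
    integral_cauchy_schwarz μ (fun x => M - a x) (fun x => z x - m) haM2 hw2 haMw
  -- bound on |m|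
  have hMm : M * |m| ≤ A + B * W := by
    have h1 : |M * m| = M * |m| := by
      rw [abs_mul, abs_of_pos hMpos]
    calc M * |m| = |M * m| := h1.symm
      _ = |(∫ x, a x * z x ∂μ) + ∫ x, (M - a x) * (z x - m) ∂μ| := by rw [hkey]
      _ ≤ A + |∫ x, (M - a x) * (z x - m) ∂μ| := abs_add_le _ _
      _ ≤ A + B * W := by linarith [hCS]
  set c : ℝ := 1 / M with hc
  have hc0 : 0 < c := by positivity
  have hmbound : |m| ≤ c * (A + B * W) := by
    rw [hc, one_div, inv_mul_eq_div, le_div_iff₀ hMpos]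
    linarith [hMm]
  have hPoin : W ≤ G := hPoincare
  nlinarith [hstep, hmbound, hPoin, mul_nonneg hc0.le hB0,
    mul_le_mul_of_nonneg_left hPoin (mul_nonneg hc0.le hB0)]
end

section
/- Let $p \in [1,\infty]$, $T > 0$, and let $z : (0,T) \to L^p(\mathbb{T}^d)$ satisfy $z \in L^2(0,T; L^p)$ and $t \mapsto \sqrt{t}\, z_t(t) \in L^2(0,T; L^p)$. Then for every $\alpha \in (0, 1/2)$, $z \in H^{1/2 - \alpha}(0,T; L^p)$, with $\|z\|_{H^{1/2-\alpha}(0,T;L^p)}^2 \leq \|z\|_{L^2(0,T;L^p)}^2 + C_{\alpha,T}\, \|\sqrt{t}\, z_t\|_{L^2(0,T;L^p)}^2$ for a constant $C_{\alpha,T}$ depending only on $\alpha$ and $T$. -/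
open MeasureTheory Set ENNReal

/-!
By the fundamental theorem of calculus and the Cauchy–Schwarz inequality with weights `√s` and
`1/√s`, an increment satisfies `‖z (t + h) - z t‖² ≤ K log (1 + h / t)` with
`K = ∫₀ᵀ s ‖z' s‖² ds`. Since `log (1 + x) ≤ x ^ β / β` for `β = 1 - α`, the integrand of the
double integral is at most `K / (1 - α) · h ^ (α - 1) t ^ (α - 1)`, which is integrable on
`(0, T)²` because `α > 0`.
-/

theorem Real.log_one_add_le_rpow_div {x β : ℝ} (hx : 0 ≤ x) (hβ : 0 < β) (hβ1 : β ≤ 1) :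
    Real.log (1 + x) ≤ x ^ β / β := by
  have hsub : (1 + x) ^ β ≤ 1 + x ^ β := by
    simpa using Real.rpow_add_le_add_rpow zero_le_one hx hβ.le hβ1
  have hlog : β * Real.log (1 + x) ≤ x ^ β :=
    calc β * Real.log (1 + x) = Real.log ((1 + x) ^ β) := (Real.log_rpow (by positivity) β).symm
      _ ≤ Real.log (1 + x ^ β) := Real.log_le_log (by positivity) hsub
      _ ≤ x ^ β := by linarith [Real.log_le_sub_one_of_pos (by positivity : 0 < 1 + x ^ β)]
  rw [le_div_iff₀ hβ]
  linarith

theorem sq_integral_mul_le_integral_sq_mul_integral_sq {α : Type*} [MeasurableSpace α]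
    {μ : Measure α} {f g : α → ℝ} (hf₀ : 0 ≤ᵐ[μ] f) (hg₀ : 0 ≤ᵐ[μ] g) (hf : MemLp f 2 μ)
    (hg : MemLp g 2 μ) :
    (∫ a, f a * g a ∂μ) ^ 2 ≤ (∫ a, f a ^ 2 ∂μ) * ∫ a, g a ^ 2 ∂μ := by
  have holder := integral_mul_le_Lp_mul_Lq_of_nonneg Real.HolderConjugate.two_two hf₀ hg₀
    (by simpa using hf) (by simpa using hg)
  simp only [Real.rpow_two, ← Real.sqrt_eq_rpow] at holder
  have hfg : 0 ≤ ∫ a, f a * g a ∂μ :=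
    integral_nonneg_of_ae (by filter_upwards [hf₀, hg₀] with a ha hb using mul_nonneg ha hb)
  calc (∫ a, f a * g a ∂μ) ^ 2
      ≤ (√(∫ a, f a ^ 2 ∂μ) * √(∫ a, g a ^ 2 ∂μ)) ^ 2 := pow_le_pow_left₀ hfg holder 2
    _ = (∫ a, f a ^ 2 ∂μ) * ∫ a, g a ^ 2 ∂μ := by
      rw [mul_pow, Real.sq_sqrt (integral_nonneg fun a => sq_nonneg _),
        Real.sq_sqrt (integral_nonneg fun a => sq_nonneg _)]

theorem lintegral_Ioo_ofReal_rpow {b r : ℝ} (hb : 0 ≤ b) (hr : -1 < r) :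
    ∫⁻ t in Ioo 0 b, ENNReal.ofReal (t ^ r) = ENNReal.ofReal (b ^ (r + 1) / (r + 1)) := by
  have hint : IntegrableOn (fun t : ℝ => t ^ r) (Ioo 0 b) :=
    ((intervalIntegrable_iff_integrableOn_Ioc_of_le hb).1
      (intervalIntegral.intervalIntegrable_rpow' hr)).mono_set Ioo_subset_Ioc_self
  rw [← ofReal_integral_eq_lintegral_ofReal hint
      (ae_restrict_of_forall_mem measurableSet_Ioo fun t ht => Real.rpow_nonneg ht.1.le r),
    ← integral_Ioc_eq_integral_Ioo, ← intervalIntegral.integral_of_le hb,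
    integral_rpow (Or.inl hr), Real.zero_rpow (by linarith), sub_zero]

section WeightedIoc

variable {a b : ℝ} {u : ℝ → ℝ}

theorem memLp_two_sqrt_mul_of_integrableOn_mul_sq (ha : 0 ≤ a)
    (hu : AEStronglyMeasurable u (volume.restrict (Ioc a b)))
    (hwu : IntegrableOn (fun s => s * u s ^ 2) (Ioc a b)) :
    MemLp (fun s => √s * u s) 2 (volume.restrict (Ioc a b)) := by
  refine (memLp_two_iff_integrable_sq
    (Real.continuous_sqrt.aestronglyMeasurable.mul hu)).2 (hwu.congr_fun (fun s hs => ?_)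
      measurableSet_Ioc)
  simp only [Pi.mul_apply, mul_pow, Real.sq_sqrt (ha.trans hs.1.le)]

theorem memLp_two_inv_sqrt (ha : 0 < a) :
    MemLp (fun s : ℝ => (√s)⁻¹) 2 (volume.restrict (Ioc a b)) :=
  MemLp.of_bound Real.continuous_sqrt.measurable.inv.aestronglyMeasurable (√a)⁻¹
    (ae_restrict_of_forall_mem measurableSet_Ioc fun s hs => by
      rw [norm_inv, Real.norm_of_nonneg (Real.sqrt_nonneg s)]
      exact inv_anti₀ (Real.sqrt_pos.2 ha) (Real.sqrt_le_sqrt hs.1.le))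

theorem eqOn_sqrt_mul_mul_inv_sqrt (ha : 0 ≤ a) :
    EqOn u (fun s => √s * u s * (√s)⁻¹) (Ioc a b) := fun s hs => by
  have : √s ≠ 0 := (Real.sqrt_pos.2 (ha.trans_lt hs.1)).ne'
  field_simp

theorem integrableOn_of_integrableOn_mul_sq (ha : 0 < a)
    (hu : AEStronglyMeasurable u (volume.restrict (Ioc a b)))
    (hwu : IntegrableOn (fun s => s * u s ^ 2) (Ioc a b)) :
    IntegrableOn u (Ioc a b) :=
  IntegrableOn.congr_fun ((memLp_two_sqrt_mul_of_integrableOn_mul_sq ha.le hu hwu).integrable_mul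
    (memLp_two_inv_sqrt ha)) (eqOn_sqrt_mul_mul_inv_sqrt ha.le).symm measurableSet_Ioc

theorem sq_setIntegral_le_setIntegral_mul_sq_mul_log (ha : 0 < a) (hab : a ≤ b)
    (hu₀ : ∀ s, 0 ≤ u s) (hu : AEStronglyMeasurable u (volume.restrict (Ioc a b)))
    (hwu : IntegrableOn (fun s => s * u s ^ 2) (Ioc a b)) :
    (∫ s in Ioc a b, u s) ^ 2 ≤ (∫ s in Ioc a b, s * u s ^ 2) * Real.log (b / a) := by
  have hf := memLp_two_sqrt_mul_of_integrableOn_mul_sq ha.le hu hwu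
  have hcs := sq_integral_mul_le_integral_sq_mul_integral_sq
    (ae_of_all _ fun s => mul_nonneg (Real.sqrt_nonneg s) (hu₀ s))
    (ae_of_all _ fun s => inv_nonneg.2 (Real.sqrt_nonneg s)) hf (memLp_two_inv_sqrt ha)
  have hsq : ∀ s ∈ Ioc a b, (√s * u s) ^ 2 = s * u s ^ 2 := fun s hs => by
    rw [mul_pow, Real.sq_sqrt (ha.le.trans hs.1.le)]
  have hinv : ∀ s ∈ Ioc a b, (√s)⁻¹ ^ 2 = s⁻¹ := fun s hs => by
    rw [inv_pow, Real.sq_sqrt (ha.le.trans hs.1.le)]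
  rw [← integral_inv_of_pos ha (ha.trans_le hab), intervalIntegral.integral_of_le hab]
  rwa [← setIntegral_congr_fun measurableSet_Ioc (eqOn_sqrt_mul_mul_inv_sqrt ha.le),
    setIntegral_congr_fun measurableSet_Ioc hsq,
    setIntegral_congr_fun measurableSet_Ioc hinv] at hcs

end WeightedIoc

section Increments

variable {E : Type*} [NormedAddCommGroup E] [NormedSpace ℝ E] [CompleteSpace E] {z z' : ℝ → E}

theorem norm_sub_le_setIntegral_norm_deriv {a b : ℝ} (hab : a ≤ b)
    (hz : ∀ s ∈ Icc a b, HasDerivAt z (z' s) s) (hint : IntegrableOn z' (Ioc a b)) :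
    ‖z b - z a‖ ≤ ∫ s in Ioc a b, ‖z' s‖ := by
  rw [← intervalIntegral.integral_eq_sub_of_hasDerivAt (by rwa [uIcc_of_le hab])
    ((intervalIntegrable_iff_integrableOn_Ioc_of_le hab).2 hint),
    ← intervalIntegral.integral_of_le hab]
  exact intervalIntegral.norm_integral_le_integral_norm hab

theorem norm_sub_sq_le_setIntegral_Ioc_mul_log {a b : ℝ} (ha : 0 < a) (hab : a ≤ b)
    (hz : ∀ s ∈ Icc a b, HasDerivAt z (z' s) s)
    (hwz : IntegrableOn (fun s => s * ‖z' s‖ ^ 2) (Ioc a b)) :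
    ‖z b - z a‖ ^ 2 ≤ (∫ s in Ioc a b, s * ‖z' s‖ ^ 2) * Real.log (b / a) := by
  have hmeas : AEStronglyMeasurable z' (volume.restrict (Ioc a b)) :=
    (stronglyMeasurable_deriv z).aestronglyMeasurable.congr
      (ae_restrict_of_forall_mem measurableSet_Ioc fun s hs =>
        (hz s (Ioc_subset_Icc_self hs)).deriv)
  have hint : IntegrableOn z' (Ioc a b) :=
    (integrable_norm_iff hmeas).1 (integrableOn_of_integrableOn_mul_sq ha hmeas.norm hwz)
  calc ‖z b - z a‖ ^ 2 ≤ (∫ s in Ioc a b, ‖z' s‖) ^ 2 :=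
        pow_le_pow_left₀ (norm_nonneg _) (norm_sub_le_setIntegral_norm_deriv hab hz hint) 2
    _ ≤ _ := sq_setIntegral_le_setIntegral_mul_sq_mul_log ha hab (fun s => norm_nonneg _)
        hmeas.norm hwz

theorem norm_sub_sq_le_setIntegral_Ioo_mul_log {T t h : ℝ}
    (hz : ∀ s ∈ Ioo 0 T, HasDerivAt z (z' s) s)
    (hwz : IntegrableOn (fun s => s * ‖z' s‖ ^ 2) (Ioo 0 T)) (ht : 0 < t) (hh : 0 ≤ h)
    (hth : t + h < T) :
    ‖z (t + h) - z t‖ ^ 2 ≤ (∫ s in Ioo 0 T, s * ‖z' s‖ ^ 2) * Real.log ((t + h) / t) := by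
  have hsub : Icc t (t + h) ⊆ Ioo 0 T := fun s hs => ⟨ht.trans_le hs.1, hs.2.trans_lt hth⟩
  have hsub' : Ioc t (t + h) ⊆ Ioo 0 T := Ioc_subset_Icc_self.trans hsub
  calc ‖z (t + h) - z t‖ ^ 2
      ≤ (∫ s in Ioc t (t + h), s * ‖z' s‖ ^ 2) * Real.log ((t + h) / t) :=
        norm_sub_sq_le_setIntegral_Ioc_mul_log ht (by linarith) (fun s hs => hz s (hsub hs))
          (hwz.mono_set hsub')
    _ ≤ (∫ s in Ioo 0 T, s * ‖z' s‖ ^ 2) * Real.log ((t + h) / t) :=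
        mul_le_mul_of_nonneg_right
          (setIntegral_mono_set hwz (ae_restrict_of_forall_mem measurableSet_Ioo fun s hs =>
            mul_nonneg hs.1.le (sq_nonneg _)) hsub'.eventuallyLE)
          (Real.log_nonneg ((one_le_div ht).2 (by linarith)))

end Increments

theorem div_rpow_le_of_le_mul_log {K δ α t h : ℝ} (hK : 0 ≤ K) (hα0 : 0 ≤ α) (hα1 : α < 1)
    (ht : 0 < t) (hh : 0 < h) (hδ : δ ≤ K * Real.log ((t + h) / t)) :
    δ / h ^ (2 - 2 * α) ≤ K / (1 - α) * (h ^ (α - 1) * t ^ (α - 1)) := by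
  have hlog : Real.log ((t + h) / t) ≤ (h / t) ^ (1 - α) / (1 - α) := by
    rw [add_div, div_self ht.ne']
    exact Real.log_one_add_le_rpow_div (by positivity) (by linarith) (by linarith)
  have e1 : h ^ (2 - 2 * α) = h ^ (1 - α) * h ^ (1 - α) := by
    rw [← Real.rpow_add hh]; ring_nf
  rw [Real.div_rpow hh.le ht.le] at hlog
  rw [show α - 1 = -(1 - α) by ring, Real.rpow_neg hh.le,
    Real.rpow_neg ht.le, e1, div_le_iff₀ (by positivity)]
  calc δ ≤ K * (h ^ (1 - α) / t ^ (1 - α) / (1 - α)) :=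
        hδ.trans (mul_le_mul_of_nonneg_left hlog hK)
    _ = _ := by field_simp

theorem lintegral_Ioo_lintegral_Ioo_ofReal_mul_rpow_mul_rpow {T α c : ℝ} (hT : 0 ≤ T)
    (hα : 0 < α) (hc : 0 ≤ c) :
    ∫⁻ h in Ioo 0 T, ∫⁻ t in Ioo 0 T, ENNReal.ofReal (c * (h ^ (α - 1) * t ^ (α - 1)))
      = ENNReal.ofReal (c * (T ^ α / α) ^ 2) := by
  have hI := lintegral_Ioo_ofReal_rpow hT (show -1 < α - 1 by linarith)
  rw [sub_add_cancel] at hI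
  calc ∫⁻ h in Ioo 0 T, ∫⁻ t in Ioo 0 T, ENNReal.ofReal (c * (h ^ (α - 1) * t ^ (α - 1)))
      = ∫⁻ h in Ioo 0 T, ENNReal.ofReal c * ENNReal.ofReal (h ^ (α - 1)) *
          ∫⁻ t in Ioo 0 T, ENNReal.ofReal (t ^ (α - 1)) := by
        refine setLIntegral_congr_fun measurableSet_Ioo fun h hh => ?_
        rw [← lintegral_const_mul' _ _ (by finiteness)]
        refine setLIntegral_congr_fun measurableSet_Ioo fun t ht => ?_
        rw [ENNReal.ofReal_mul hc, ENNReal.ofReal_mul (Real.rpow_nonneg hh.1.le _), mul_assoc]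
    _ = ENNReal.ofReal (c * (T ^ α / α) ^ 2) := by
        rw [lintegral_mul_const' _ _ (by rw [hI]; finiteness),
          lintegral_const_mul' _ _ (by finiteness), hI, ENNReal.ofReal_mul hc,
          ENNReal.ofReal_pow (by positivity), mul_assoc, sq]

/-- Fractional time regularity from a weighted bound on the time derivative:
if `z ∈ L²(0,T;E)` and `√t · z_t ∈ L²(0,T;E)`, then `z ∈ H^{1/2-α}(0,T;E)` (the
fractional norm being defined through finite differences), with
`‖z‖²_{H^{1/2-α}} ≤ ‖z‖²_{L²} + C_{α,T} ‖√t z_t‖²_{L²}`.  Here the double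
finite-difference integral is expressed as a lower integral, so that the
inequality also encodes its finiteness. -/
theorem stmt7 (T : ℝ) (hT : 0 < T) (α : ℝ) (hα : α ∈ Set.Ioo (0:ℝ) (1/2)) :
    ∃ C > 0,
      ∀ (E : Type) [instE : NormedAddCommGroup E] [instS : NormedSpace ℝ E]
        [instC : CompleteSpace E] (z z' : ℝ → E),
        (∀ t ∈ Set.Ioo (0:ℝ) T, HasDerivAt z (z' t) t) →
        IntegrableOn (fun t => ‖z t‖ ^ 2) (Set.Ioo 0 T) →
        IntegrableOn (fun t => t * ‖z' t‖ ^ 2) (Set.Ioo 0 T) →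
        (ENNReal.ofReal (∫ t in Set.Ioo (0:ℝ) T, ‖z t‖ ^ 2)
          + ∫⁻ h in Set.Ioo (0:ℝ) T, ∫⁻ t in Set.Ioo (0:ℝ) (T - h),
              ENNReal.ofReal (‖z (t + h) - z t‖ ^ 2 / h ^ (2 - 2*α)))
        ≤ ENNReal.ofReal (∫ t in Set.Ioo (0:ℝ) T, ‖z t‖ ^ 2)
          + ENNReal.ofReal (C * ∫ t in Set.Ioo (0:ℝ) T, t * ‖z' t‖ ^ 2) := by
  obtain ⟨hα0, hα1⟩ := hα
  refine ⟨(T ^ α / α) ^ 2 / (1 - α), div_pos (by positivity) (by linarith), ?_⟩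
  intro E _ _ _ z z' hz _ hwz
  set K := ∫ t in Ioo 0 T, t * ‖z' t‖ ^ 2
  have hK : 0 ≤ K :=
    setIntegral_nonneg measurableSet_Ioo fun s hs => mul_nonneg hs.1.le (sq_nonneg _)
  have hdiff : ∀ h ∈ Ioo 0 T, ∀ t ∈ Ioo 0 (T - h),
      ‖z (t + h) - z t‖ ^ 2 / h ^ (2 - 2 * α) ≤ K / (1 - α) * (h ^ (α - 1) * t ^ (α - 1)) :=
    fun h hh t ht => div_rpow_le_of_le_mul_log hK hα0.le (by linarith) ht.1 hh.1
      (norm_sub_sq_le_setIntegral_Ioo_mul_log hz hwz ht.1 hh.1.le (by linarith [ht.2]))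
  gcongr
  calc ∫⁻ h in Ioo 0 T, ∫⁻ t in Ioo 0 (T - h),
          ENNReal.ofReal (‖z (t + h) - z t‖ ^ 2 / h ^ (2 - 2 * α))
      ≤ ∫⁻ h in Ioo 0 T, ∫⁻ t in Ioo 0 T,
          ENNReal.ofReal (K / (1 - α) * (h ^ (α - 1) * t ^ (α - 1))) :=
        setLIntegral_mono' measurableSet_Ioo fun h hh =>
          (setLIntegral_mono' measurableSet_Ioo fun t ht =>
            ENNReal.ofReal_le_ofReal (hdiff h hh t ht)).trans
          (lintegral_mono_set (Ioo_subset_Ioo_right (by linarith [hh.1])))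
    _ = ENNReal.ofReal ((T ^ α / α) ^ 2 / (1 - α) * K) := by
        rw [lintegral_Ioo_lintegral_Ioo_ofReal_mul_rpow_mul_rpow hT.le hα0
          (div_nonneg hK (by linarith))]
        ring_nf
end

section
/- Let $\rho : \mathbb{T}^d \to [0,\infty)$ be bounded with $M := \int_{\mathbb{T}^d}\rho\,dx > 0$, and let $g \in H^1(\mathbb{T}^d)$ with mean $\bar g$. Then $M|\bar g| \leq \left|\int_{\mathbb{T}^d} \rho g\,dx\right| + \|\rho - M\|_{L^2}\,\|\nabla g\|_{L^2}$, and consequently, for every $p$ with the Sobolev embedding $H^1(\mathbb{T}^d) \hookrightarrow L^p(\mathbb{T}^d)$, $\|g\|_{L^p} \leq \left(C_p + \frac{\|\rho\|_{L^2}}{M}\right)\|\nabla g\|_{L^2} + \frac{1}{M^{1/2}}\|\sqrt{\rho}\, g\|_{L^2}$. -/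
/-!
The mean of `g` differs from the weighted mean `∫ ρ g / M` by the covariance of `ρ` and `g`,
which Cauchy–Schwarz bounds by `‖ρ - M‖₂ ‖g - ḡ‖₂`, and Poincaré bounds `‖g - ḡ‖₂` by `‖∇g‖₂`.
For the `Lᵖ` bound, Minkowski splits `g` into `g - ḡ`, controlled by Sobolev, and the constant
`ḡ`, controlled by the mean bound together with `|∫ ρ g| ≤ √M ‖√ρ g‖₂` and `Var ρ ≤ ∫ ρ²`.
-/

open MeasureTheory ProbabilityTheory

namespace MeasureTheory

variable {Ω : Type*} [MeasurableSpace Ω] {μ : Measure Ω}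

theorem abs_integral_mul_le_sqrt_integral_sq_mul_sqrt_integral_sq {f h : Ω → ℝ}
    (hf : MemLp f 2 μ) (hh : MemLp h 2 μ) :
    |∫ x, f x * h x ∂μ| ≤ Real.sqrt (∫ x, f x ^ 2 ∂μ) * Real.sqrt (∫ x, h x ^ 2 ∂μ) := by
  have hpq : (2 : ℝ).HolderConjugate 2 := .two_two
  have holder := integral_mul_norm_le_Lp_mul_Lq (μ := μ) (f := f) (g := h) hpq
    (by rwa [ENNReal.ofReal_ofNat]) (by rwa [ENNReal.ofReal_ofNat])
  simp only [Real.norm_eq_abs, Real.rpow_two, sq_abs, ← Real.sqrt_eq_rpow] at holder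
  calc |∫ x, f x * h x ∂μ| ≤ ∫ x, |f x| * |h x| ∂μ := by
        simpa only [Real.norm_eq_abs, abs_mul] using
          norm_integral_le_integral_norm (fun x => f x * h x)
    _ ≤ _ := holder

theorem abs_integral_mul_le_sqrt_integral_mul_sqrt_integral_mul_sq {w f : Ω → ℝ}
    (hw_meas : AEStronglyMeasurable w μ) (hf_meas : AEStronglyMeasurable f μ)
    (hw_nonneg : ∀ x, 0 ≤ w x) (hw : Integrable w μ)
    (hwf : Integrable (fun x => w x * f x ^ 2) μ) :
    |∫ x, w x * f x ∂μ| ≤ Real.sqrt (∫ x, w x ∂μ) * Real.sqrt (∫ x, w x * f x ^ 2 ∂μ) := by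
  have hsqrt : AEStronglyMeasurable (fun x => Real.sqrt (w x)) μ :=
    Real.continuous_sqrt.comp_aestronglyMeasurable hw_meas
  have hsq : ∀ x, Real.sqrt (w x) ^ 2 = w x := fun x => Real.sq_sqrt (hw_nonneg x)
  have hsq' : ∀ x, (Real.sqrt (w x) * f x) ^ 2 = w x * f x ^ 2 := fun x => by
    rw [mul_pow, hsq]
  have cs := abs_integral_mul_le_sqrt_integral_sq_mul_sqrt_integral_sq
    ((memLp_two_iff_integrable_sq hsqrt).2 (by simpa only [hsq] using hw))
    ((memLp_two_iff_integrable_sq (f := fun x => Real.sqrt (w x) * f x)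
      (hsqrt.mul hf_meas)).2 (by simpa only [hsq'] using hwf))
  simpa only [← mul_assoc, ← sq, hsq, hsq'] using cs
theorem eLpNorm_ofReal_eq_ofReal_integral_abs_rpow {p : ℝ} (hp : 0 < p) {f : Ω → ℝ}
    (hf : MemLp f (ENNReal.ofReal p) μ) :
    eLpNorm f (ENNReal.ofReal p) μ = ENNReal.ofReal ((∫ x, |f x| ^ p ∂μ) ^ (1 / p)) := by
  rw [hf.eLpNorm_eq_integral_rpow_norm (by simpa using hp) ENNReal.ofReal_ne_top,
    ENNReal.toReal_ofReal hp.le, one_div]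
  simp only [Real.norm_eq_abs]

theorem rpow_integral_abs_rpow_le_sub_const_add [IsProbabilityMeasure μ] {p : ℝ} (hp : 1 ≤ p)
    {f : Ω → ℝ} (hf : AEStronglyMeasurable f μ) (hfp : Integrable (fun x => |f x| ^ p) μ)
    (c : ℝ) :
    (∫ x, |f x| ^ p ∂μ) ^ (1 / p) ≤ (∫ x, |f x - c| ^ p ∂μ) ^ (1 / p) + |c| := by
  have hp0 : 0 < p := zero_lt_one.trans_le hp
  have hmem : MemLp f (ENNReal.ofReal p) μ :=
    (integrable_norm_rpow_iff hf (by simpa using hp0) ENNReal.ofReal_ne_top).1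
      (by simpa only [ENNReal.toReal_ofReal hp0.le, Real.norm_eq_abs] using hfp)
  have hmem_sub : MemLp (fun x => f x - c) (ENNReal.ofReal p) μ := hmem.sub (memLp_const c)
  have htri := eLpNorm_add_le hmem_sub.1 aestronglyMeasurable_const
    (ENNReal.one_le_ofReal.2 hp) (μ := μ) (g := fun _ => c)
  rw [show (fun x => f x - c) + (fun _ => c) = f by ext; simp,
    eLpNorm_const c (by simpa using hp0) (IsProbabilityMeasure.ne_zero μ),
    eLpNorm_ofReal_eq_ofReal_integral_abs_rpow hp0 hmem,
    eLpNorm_ofReal_eq_ofReal_integral_abs_rpow hp0 hmem_sub] at htri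
  simp only [measure_univ, ENNReal.one_rpow, mul_one, Real.enorm_eq_ofReal_abs] at htri
  rwa [← ENNReal.ofReal_add (by positivity) (abs_nonneg c),
    ENNReal.ofReal_le_ofReal_iff (by positivity)] at htri

end MeasureTheory

namespace ProbabilityTheory

variable {Ω : Type*} [MeasurableSpace Ω] {μ : Measure Ω} {X Y : Ω → ℝ}

theorem abs_covariance_le_sqrt_variance_mul_sqrt_variance [IsFiniteMeasure μ]
    (hX : MemLp X 2 μ) (hY : MemLp Y 2 μ) :
    |cov[X, Y; μ]| ≤ Real.sqrt Var[X; μ] * Real.sqrt Var[Y; μ] := by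
  rw [covariance, variance_eq_integral hX.aemeasurable, variance_eq_integral hY.aemeasurable]
  exact abs_integral_mul_le_sqrt_integral_sq_mul_sqrt_integral_sq (hX.sub (memLp_const _))
    (hY.sub (memLp_const _))

theorem abs_integral_mul_integral_le [IsProbabilityMeasure μ]
    (hX : MemLp X 2 μ) (hY : MemLp Y 2 μ) :
    |μ[X] * μ[Y]| ≤ |μ[X * Y]| + Real.sqrt Var[X; μ] * Real.sqrt Var[Y; μ] := by
  have hcov := covariance_eq_sub hX hY
  calc |μ[X] * μ[Y]| = |μ[X * Y] - cov[X, Y; μ]| := by rw [hcov, sub_sub_cancel]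
    _ ≤ |μ[X * Y]| + |cov[X, Y; μ]| := abs_sub _ _
    _ ≤ _ := by grw [abs_covariance_le_sqrt_variance_mul_sqrt_variance hX hY]

theorem integral_mul_abs_integral_le [IsProbabilityMeasure μ] {w : Ω → ℝ}
    (hw : MemLp w 2 μ) (hw_nonneg : ∀ x, 0 ≤ w x) (hX : MemLp X 2 μ)
    (hwX : Integrable (fun x => w x * X x ^ 2) μ) :
    μ[w] * |μ[X]| ≤ Real.sqrt μ[w] * Real.sqrt (∫ x, w x * X x ^ 2 ∂μ)
      + Real.sqrt (∫ x, w x ^ 2 ∂μ) * Real.sqrt Var[X; μ] := by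
  calc μ[w] * |μ[X]| = |μ[w] * μ[X]| := by
        rw [abs_mul, abs_of_nonneg (integral_nonneg (f := w) hw_nonneg)]
    _ ≤ |μ[w * X]| + Real.sqrt Var[w; μ] * Real.sqrt Var[X; μ] :=
        abs_integral_mul_integral_le hw hX
    _ ≤ _ := by
        gcongr
        · exact abs_integral_mul_le_sqrt_integral_mul_sqrt_integral_mul_sq hw.1 hX.1 hw_nonneg
            (hw.integrable one_le_two) hwX
        · simpa using variance_le_expectation_sq hw.1

end ProbabilityTheory

/-- The torus is modelled as a probability space; the Poincaré inequality (constant 1) and the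
Sobolev embedding (constant `Cp`) enter as hypotheses linking `g` to its gradient `G`. -/
theorem stmt10_general
    {Ω : Type*} [MeasurableSpace Ω] (μ : Measure Ω) [IsProbabilityMeasure μ]
    {F : Type*} [NormedAddCommGroup F]
    (ρ : Ω → ℝ) (M : ℝ) (g : Ω → ℝ) (G : Ω → F) (p Cp : ℝ)
    (hρ_meas : Measurable ρ) (hρ_nonneg : ∀ x, 0 ≤ ρ x)
    (hM : M = ∫ x, ρ x ∂μ) (hMpos : 0 < M)
    (hp : 1 ≤ p)
    (hg : Integrable g μ) (hg2 : Integrable (fun x => (g x) ^ 2) μ)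
    (hρg2 : Integrable (fun x => ρ x * (g x) ^ 2) μ)
    (hρ2 : Integrable (fun x => (ρ x) ^ 2) μ)
    (hgp : Integrable (fun x => |g x| ^ p) μ)
    (hPoincare : Real.sqrt (∫ x, (g x - ∫ y, g y ∂μ) ^ 2 ∂μ)
        ≤ Real.sqrt (∫ x, ‖G x‖ ^ 2 ∂μ))
    (hSobolev : (∫ x, |g x - ∫ y, g y ∂μ| ^ p ∂μ) ^ (1 / p)
        ≤ Cp * Real.sqrt (∫ x, ‖G x‖ ^ 2 ∂μ)) :
    M * |∫ x, g x ∂μ|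
        ≤ |∫ x, ρ x * g x ∂μ|
          + Real.sqrt (∫ x, (ρ x - M) ^ 2 ∂μ) * Real.sqrt (∫ x, ‖G x‖ ^ 2 ∂μ)
    ∧ (∫ x, |g x| ^ p ∂μ) ^ (1 / p)
        ≤ (Cp + Real.sqrt (∫ x, (ρ x) ^ 2 ∂μ) / M) * Real.sqrt (∫ x, ‖G x‖ ^ 2 ∂μ)
          + (1 / Real.sqrt M) * Real.sqrt (∫ x, ρ x * (g x) ^ 2 ∂μ) := by
  have hρL2 : MemLp ρ 2 μ := (memLp_two_iff_integrable_sq hρ_meas.aestronglyMeasurable).2 hρ2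
  have hgL2 : MemLp g 2 μ := (memLp_two_iff_integrable_sq hg.aestronglyMeasurable).2 hg2
  have hVarg : Real.sqrt Var[g; μ] ≤ Real.sqrt (∫ x, ‖G x‖ ^ 2 ∂μ) := by
    rwa [variance_eq_integral hg.aestronglyMeasurable.aemeasurable]
  constructor
  · have h := abs_integral_mul_integral_le hρL2 hgL2
    rw [abs_mul, ← hM, abs_of_pos hMpos, variance_eq_integral hρ_meas.aemeasurable, ← hM] at h
    grw [h, hVarg]
    rfl
  · have hmean : |∫ x, g x ∂μ| ≤ (Real.sqrt M * Real.sqrt (∫ x, ρ x * g x ^ 2 ∂μ)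
        + Real.sqrt (∫ x, ρ x ^ 2 ∂μ) * Real.sqrt (∫ x, ‖G x‖ ^ 2 ∂μ)) / M := by
      rw [le_div_iff₀' hMpos]
      grw [← hVarg]
      rw [hM]
      exact integral_mul_abs_integral_le hρL2 hρ_nonneg hgL2 hρg2
    calc (∫ x, |g x| ^ p ∂μ) ^ (1 / p)
        ≤ (∫ x, |g x - ∫ y, g y ∂μ| ^ p ∂μ) ^ (1 / p) + |∫ x, g x ∂μ| :=
          rpow_integral_abs_rpow_le_sub_const_add hp hg.aestronglyMeasurable hgp _
      _ ≤ Cp * Real.sqrt (∫ x, ‖G x‖ ^ 2 ∂μ) + (Real.sqrt M * Real.sqrt (∫ x, ρ x * g x ^ 2 ∂μ)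
          + Real.sqrt (∫ x, ρ x ^ 2 ∂μ) * Real.sqrt (∫ x, ‖G x‖ ^ 2 ∂μ)) / M :=
          add_le_add hSobolev hmean
      _ = _ := by rw [← Real.sqrt_div_self']; ring

/-- Control of the mean and of Lebesgue norms by the gradient and a degenerate
weighted `L²` norm. The torus is modelled as a probability space; the classical
Poincaré inequality (constant 1) and the Sobolev embedding with constant `Cp`
are given as hypotheses linking `g` to its gradient `G`. -/
theorem stmt10
    {Ω : Type*} [MeasurableSpace Ω] (μ : Measure Ω) [IsProbabilityMeasure μ]
    {F : Type*} [NormedAddCommGroup F]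
    (ρ : Ω → ℝ) (B M : ℝ) (g : Ω → ℝ) (G : Ω → F) (p Cp : ℝ)
    (hρ_meas : Measurable ρ) (hρ_nonneg : ∀ x, 0 ≤ ρ x) (hρ_bdd : ∀ x, ρ x ≤ B)
    (hM : M = ∫ x, ρ x ∂μ) (hMpos : 0 < M)
    (hp : 1 ≤ p) (hCp : 0 ≤ Cp)
    (hg : Integrable g μ) (hg2 : Integrable (fun x => (g x) ^ 2) μ)
    (hρg : Integrable (fun x => ρ x * g x) μ)
    (hρg2 : Integrable (fun x => ρ x * (g x) ^ 2) μ)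
    (hρ2 : Integrable (fun x => (ρ x) ^ 2) μ)
    (hρM2 : Integrable (fun x => (ρ x - M) ^ 2) μ)
    (hgp : Integrable (fun x => |g x| ^ p) μ)
    (hG2 : Integrable (fun x => ‖G x‖ ^ 2) μ)
    (hPoincare : Real.sqrt (∫ x, (g x - ∫ y, g y ∂μ) ^ 2 ∂μ)
        ≤ Real.sqrt (∫ x, ‖G x‖ ^ 2 ∂μ))
    (hSobolev : (∫ x, |g x - ∫ y, g y ∂μ| ^ p ∂μ) ^ (1 / p)
        ≤ Cp * Real.sqrt (∫ x, ‖G x‖ ^ 2 ∂μ)) :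
    M * |∫ x, g x ∂μ|
        ≤ |∫ x, ρ x * g x ∂μ|
          + Real.sqrt (∫ x, (ρ x - M) ^ 2 ∂μ) * Real.sqrt (∫ x, ‖G x‖ ^ 2 ∂μ)
    ∧ (∫ x, |g x| ^ p ∂μ) ^ (1 / p)
        ≤ (Cp + Real.sqrt (∫ x, (ρ x) ^ 2 ∂μ) / M) * Real.sqrt (∫ x, ‖G x‖ ^ 2 ∂μ)
          + (1 / Real.sqrt M) * Real.sqrt (∫ x, ρ x * (g x) ^ 2 ∂μ) :=
  stmt10_general μ ρ M g G p Cp hρ_meas hρ_nonneg hM hMpos hp hg hg2 hρg2 hρ2 hgp hPoincare hSobolev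
end

section
/- Let $d = 3$, $\rho : \mathbb{T}^3 \to [0,\rho^*]$ measurable, and $v \in H^2(\mathbb{T}^3)$ a vector field. Then for every $\varepsilon > 0$ there is a constant $C_\varepsilon$ (independent of $\rho, v$) such that $\int_{\mathbb{T}^3} \rho\, |v \cdot \nabla v|^2\,dx \leq \varepsilon\, \|\nabla^2 v\|_{L^2}^2 + C_\varepsilon\, (\rho^*)^3\, \varepsilon^{-3}\, \|\sqrt{\rho}\, v\|_{L^2}^2\, \|\nabla v\|_{L^2}^8$. -/
/-!
Write `I = ∫ ρ |(∇v) v|²`. Since `|(∇v) v| ≤ |∇v| |v|`, Cauchy–Schwarz gives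
`I² ≤ ∫ ρ²|v|⁴ · ∫ |∇v|⁴`. Each `L⁴` factor is interpolated between `L²` and `L⁶` by Cauchy–Schwarz
again, `(∫ ρ²|v|⁴)² ≤ ρ*³ ∫ ρ|v|² ∫ |v|⁶` and `(∫ |∇v|⁴)² ≤ ∫ |∇v|² ∫ |∇v|⁶`, and the Sobolev
bounds turn the `L⁶` integrals into `‖∇v‖₂⁶` and `‖∇²v‖₂⁶`. Altogether
`I⁴ ≤ CS¹² ρ*³ ‖√ρ v‖₂² ‖∇v‖₂⁸ ‖∇²v‖₂⁶`, and Young's inequality with exponents `(4, 4/3)` splits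
off `ε ‖∇²v‖₂²`.
-/

open MeasureTheory

section CauchySchwarz

variable {Ω : Type*} [MeasurableSpace Ω] {μ : Measure Ω} {f g h : Ω → ℝ}

theorem integrable_of_sq_le_mul (hf : Integrable f μ) (hg : Integrable g μ)
    (hh : AEStronglyMeasurable h μ) (hfg : ∀ᵐ x ∂μ, h x ^ 2 ≤ f x * g x) :
    Integrable h μ := by
  refine (hf.add hg).mono hh ?_
  filter_upwards [hfg] with x hx
  simp only [Real.norm_eq_abs, Pi.add_apply, ← sq_le_sq]
  nlinarith [sq_nonneg (f x), sq_nonneg (g x), sq_nonneg (f x + g x)]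

theorem sq_integral_le_integral_mul_integral (hf : Integrable f μ) (hg : Integrable g μ)
    (hf0 : 0 ≤ᵐ[μ] f) (hg0 : 0 ≤ᵐ[μ] g) (hfg : ∀ᵐ x ∂μ, h x ^ 2 ≤ f x * g x) :
    (∫ x, h x ∂μ) ^ 2 ≤ (∫ x, f x ∂μ) * ∫ x, g x ∂μ := by
  by_cases hh : Integrable h μ
  swap
  · rw [integral_undef hh, sq, zero_mul]
    exact mul_nonneg (integral_nonneg_of_ae hf0) (integral_nonneg_of_ae hg0)
  have memLp_sqrt : ∀ {u : Ω → ℝ}, Integrable u μ → 0 ≤ᵐ[μ] u →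
      MemLp (fun x => √(u x)) 2 μ := fun hu hu0 => by
    rw [memLp_two_iff_integrable_sq (Real.continuous_sqrt.comp_aestronglyMeasurable hu.1)]
    exact hu.congr (by filter_upwards [hu0] with x hx using (Real.sq_sqrt hx).symm)
  have hpoint : ∀ᵐ x ∂μ, |h x| ≤ √(f x) * √(g x) := by
    filter_upwards [hfg, hf0] with x hx hfx
    rw [← Real.sqrt_mul hfx, ← Real.sqrt_sq_eq_abs]
    exact Real.sqrt_le_sqrt hx
  have holder := integral_mul_le_Lp_mul_Lq_of_nonneg Real.HolderConjugate.two_two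
    (ae_of_all _ fun x => Real.sqrt_nonneg (f x)) (ae_of_all _ fun x => Real.sqrt_nonneg (g x))
    (by simpa using memLp_sqrt hf hf0) (by simpa using memLp_sqrt hg hg0)
  have hsq : ∀ {u : Ω → ℝ}, 0 ≤ᵐ[μ] u → ∫ x, √(u x) ^ (2 : ℝ) ∂μ = ∫ x, u x ∂μ := fun hu0 =>
    integral_congr_ae <| by
      filter_upwards [hu0] with x hx
      rw [Real.rpow_two, Real.sq_sqrt hx]
  rw [hsq hf0, hsq hg0, ← Real.sqrt_eq_rpow, ← Real.sqrt_eq_rpow] at holder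
  calc (∫ x, h x ∂μ) ^ 2 = |∫ x, h x ∂μ| ^ 2 := (sq_abs _).symm
    _ ≤ (√(∫ x, f x ∂μ) * √(∫ x, g x ∂μ)) ^ 2 := by
        gcongr
        refine abs_integral_le_integral_abs.trans ((integral_mono_ae hh.abs ?_ hpoint).trans holder)
        exact (memLp_sqrt hf hf0).integrable_mul (memLp_sqrt hg hg0)
    _ = (∫ x, f x ∂μ) * ∫ x, g x ∂μ := by
        rw [mul_pow, Real.sq_sqrt (integral_nonneg_of_ae hf0),
          Real.sq_sqrt (integral_nonneg_of_ae hg0)]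

variable {c : ℝ}

theorem integrable_sq_of_pow_three_le (hf : Integrable f μ) (hg : Integrable g μ)
    (hfg : ∀ᵐ x ∂μ, f x ^ 3 ≤ c * g x) (hf0 : 0 ≤ᵐ[μ] f) :
    Integrable (fun x => f x ^ 2) μ := by
  refine integrable_of_sq_le_mul hf (hg.const_mul c) (hf.1.pow 2) ?_
  filter_upwards [hfg, hf0] with x hx hx0
  calc (f x ^ 2) ^ 2 = f x * f x ^ 3 := by ring
    _ ≤ f x * (c * g x) := mul_le_mul_of_nonneg_left hx hx0

theorem sq_integral_sq_le_of_pow_three_le (hf : Integrable f μ) (hg : Integrable g μ)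
    (hfg : ∀ᵐ x ∂μ, f x ^ 3 ≤ c * g x) (hf0 : 0 ≤ᵐ[μ] f) :
    (∫ x, f x ^ 2 ∂μ) ^ 2 ≤ (∫ x, f x ∂μ) * (c * ∫ x, g x ∂μ) := by
  rw [← integral_const_mul]
  refine sq_integral_le_integral_mul_integral hf (hg.const_mul c) hf0 ?_ ?_
  · filter_upwards [hfg, hf0] with x hx hx0 using (pow_nonneg hx0 3).trans hx
  · filter_upwards [hfg, hf0] with x hx hx0
    calc (f x ^ 2) ^ 2 = f x * f x ^ 3 := by ring
      _ ≤ f x * (c * g x) := mul_le_mul_of_nonneg_left hx hx0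

theorem sq_integral_mul_norm_apply_sq_le {𝕜 E G : Type*} [NontriviallyNormedField 𝕜]
    [NormedAddCommGroup E] [NormedSpace 𝕜 E] [NormedAddCommGroup G] [NormedSpace 𝕜 G]
    {w : Ω → ℝ} {L : Ω → E →L[𝕜] G} {u : Ω → E} (hw : 0 ≤ᵐ[μ] w)
    (hu : Integrable (fun x => (w x * ‖u x‖ ^ 2) ^ 2) μ)
    (hL : Integrable (fun x => (‖L x‖ ^ 2) ^ 2) μ) :
    (∫ x, w x * ‖L x (u x)‖ ^ 2 ∂μ) ^ 2
      ≤ (∫ x, (w x * ‖u x‖ ^ 2) ^ 2 ∂μ) * ∫ x, (‖L x‖ ^ 2) ^ 2 ∂μ := by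
  refine sq_integral_le_integral_mul_integral hu hL (ae_of_all _ fun x => by positivity)
    (ae_of_all _ fun x => by positivity) ?_
  filter_upwards [hw] with x hx
  calc (w x * ‖L x (u x)‖ ^ 2) ^ 2 ≤ (w x * (‖L x‖ * ‖u x‖) ^ 2) ^ 2 := by
        gcongr
        exacts [mul_nonneg hx (by positivity), (L x).le_opNorm (u x)]
    _ = (w x * ‖u x‖ ^ 2) ^ 2 * (‖L x‖ ^ 2) ^ 2 := by ring

end CauchySchwarz

theorem le_add_of_pow_four_le_mul_pow_three {x y z : ℝ} (hy : 0 ≤ y) (hz : 0 ≤ z)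
    (h : x ^ 4 ≤ y * z ^ 3) : x ≤ y + z := by
  by_contra! hlt
  -- `y z³ ≤ (y + z)⁴`, since the expansion of `(y + z)⁴` contains `4 y z³`
  have : (y + z) ^ 4 < x ^ 4 := pow_lt_pow_left₀ hlt (by positivity) (by norm_num)
  nlinarith [mul_nonneg hy hz, mul_nonneg (mul_nonneg hy hz) (mul_nonneg hy hz),
    pow_nonneg hy 4, pow_nonneg hz 4, mul_nonneg (pow_nonneg hy 3) hz]

theorem le_mul_add_inv_pow_three_mul_of_pow_four_le {x K H ε : ℝ} (hK : 0 ≤ K) (hH : 0 ≤ H)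
    (hε : 0 < ε) (h : x ^ 4 ≤ K * H ^ 3) : x ≤ ε * H + ε⁻¹ ^ 3 * K := by
  rw [add_comm]
  refine le_add_of_pow_four_le_mul_pow_three (by positivity) (by positivity) (h.trans_eq ?_)
  field_simp

theorem le_mul_pow_three_of_rpow_one_sixth_le {S B c : ℝ} (hS : 0 ≤ S) (hB : 0 ≤ B)
    (h : S ^ (1 / 6 : ℝ) ≤ c * √B) : S ≤ c ^ 6 * B ^ 3 := by
  have h6 := pow_le_pow_left₀ (Real.rpow_nonneg hS _) h 6
  rw [← Real.rpow_natCast, ← Real.rpow_mul hS, mul_pow,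
    show √B ^ 6 = (√B ^ 2) ^ 3 by ring, Real.sq_sqrt hB] at h6
  norm_num at h6
  exact h6

/-- 3D convection-term estimate: for `0 ≤ ρ ≤ ρ*` and `v ∈ H²(T³)` (the torus being
modelled as a probability space, with gradient `Dv` and Hessian `D2v` linked to `v`
through the Sobolev embeddings `‖v‖₆ ≤ CS ‖∇v‖₂`, `‖∇v‖₆ ≤ CS ‖∇²v‖₂`),
`∫ ρ |v·∇v|² ≤ ε ‖∇²v‖₂² + C (ρ*)³ ε⁻³ ‖√ρ v‖₂² ‖∇v‖₂⁸`. -/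
theorem stmt12 (CS : ℝ) (hCS : 0 < CS) :
    ∃ C > 0,
      ∀ {Ω : Type} [inst : MeasurableSpace Ω] (μ : Measure Ω)
        [inst2 : IsProbabilityMeasure μ]
        {F : Type} [instF : NormedAddCommGroup F]
        (ρ : Ω → ℝ) (ρs : ℝ)
        (v : Ω → EuclideanSpace ℝ (Fin 3))
        (Dv : Ω → (EuclideanSpace ℝ (Fin 3) →L[ℝ] EuclideanSpace ℝ (Fin 3)))
        (D2v : Ω → F),
        Measurable ρ → (∀ x, 0 ≤ ρ x ∧ ρ x ≤ ρs) →
        Integrable (fun x => ρ x * ‖v x‖ ^ 2) μ →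
        Integrable (fun x => ρ x * ‖Dv x (v x)‖ ^ 2) μ →
        Integrable (fun x => ‖v x‖ ^ 6) μ →
        Integrable (fun x => ‖Dv x‖ ^ 2) μ →
        Integrable (fun x => ‖Dv x‖ ^ 6) μ →
        Integrable (fun x => ‖D2v x‖ ^ 2) μ →
        ((∫ x, ‖v x‖ ^ 6 ∂μ) ^ ((1:ℝ)/6) ≤ CS * Real.sqrt (∫ x, ‖Dv x‖ ^ 2 ∂μ)) →
        ((∫ x, ‖Dv x‖ ^ 6 ∂μ) ^ ((1:ℝ)/6) ≤ CS * Real.sqrt (∫ x, ‖D2v x‖ ^ 2 ∂μ)) →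
        ∀ ε > 0,
          (∫ x, ρ x * ‖Dv x (v x)‖ ^ 2 ∂μ)
            ≤ ε * (∫ x, ‖D2v x‖ ^ 2 ∂μ)
              + C * ρs ^ 3 * ε⁻¹ ^ 3 * (∫ x, ρ x * ‖v x‖ ^ 2 ∂μ)
                * (∫ x, ‖Dv x‖ ^ 2 ∂μ) ^ 4 := by
  refine ⟨CS ^ 12, by positivity, ?_⟩
  intro Ω _ μ _ F _ ρ ρs v Dv D2v _ hρ hA _ hS hB hT _ hSobv hSobDv ε hε
  obtain ⟨x₀⟩ := nonempty_of_isProbabilityMeasure μ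
  have hρs : 0 ≤ ρs := (hρ x₀).1.trans (hρ x₀).2
  have hρv : 0 ≤ᵐ[μ] fun x => ρ x * ‖v x‖ ^ 2 :=
    ae_of_all _ fun x => mul_nonneg (hρ x).1 (by positivity)
  have hDv : 0 ≤ᵐ[μ] fun x => ‖Dv x‖ ^ 2 := ae_of_all _ fun x => by positivity
  have hρv_cube : ∀ᵐ x ∂μ, (ρ x * ‖v x‖ ^ 2) ^ 3 ≤ ρs ^ 3 * ‖v x‖ ^ 6 := ae_of_all _ fun x => by
    rw [mul_pow, ← pow_mul]
    gcongr
    exacts [(hρ x).1, (hρ x).2]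
  have hDv_cube : ∀ᵐ x ∂μ, (‖Dv x‖ ^ 2) ^ 3 ≤ 1 * ‖Dv x‖ ^ 6 :=
    ae_of_all _ fun x => le_of_eq (by ring)
  have hIPQ := sq_integral_mul_norm_apply_sq_le (ae_of_all _ fun x => (hρ x).1)
    (integrable_sq_of_pow_three_le hA hS hρv_cube hρv)
    (integrable_sq_of_pow_three_le hB hT hDv_cube hDv)
  have hPAS := sq_integral_sq_le_of_pow_three_le hA hS hρv_cube hρv
  have hQBT := sq_integral_sq_le_of_pow_three_le hB hT hDv_cube hDv
  have hSB := le_mul_pow_three_of_rpow_one_sixth_le (by positivity) (by positivity) hSobv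
  have hTH := le_mul_pow_three_of_rpow_one_sixth_le (by positivity) (by positivity) hSobDv
  set I := ∫ x, ρ x * ‖Dv x (v x)‖ ^ 2 ∂μ
  set P := ∫ x, (ρ x * ‖v x‖ ^ 2) ^ 2 ∂μ
  set Q := ∫ x, (‖Dv x‖ ^ 2) ^ 2 ∂μ
  set A := ∫ x, ρ x * ‖v x‖ ^ 2 ∂μ
  set B := ∫ x, ‖Dv x‖ ^ 2 ∂μ
  set H := ∫ x, ‖D2v x‖ ^ 2 ∂μ
  have hA0 : 0 ≤ A := integral_nonneg_of_ae hρv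
  refine (le_mul_add_inv_pow_three_mul_of_pow_four_le (H := H) (K := CS ^ 12 * ρs ^ 3 * A * B ^ 4)
    (by positivity) (by positivity) hε ?_).trans_eq (by ring)
  calc I ^ 4 = (I ^ 2) ^ 2 := by ring
    _ ≤ (P * Q) ^ 2 := pow_le_pow_left₀ (sq_nonneg I) hIPQ 2
    _ = P ^ 2 * Q ^ 2 := by ring
    _ ≤ (A * (ρs ^ 3 * ∫ x, ‖v x‖ ^ 6 ∂μ)) * (B * (1 * ∫ x, ‖Dv x‖ ^ 6 ∂μ)) :=
        mul_le_mul hPAS hQBT (sq_nonneg Q) ((sq_nonneg P).trans hPAS)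
    _ ≤ (A * (ρs ^ 3 * (CS ^ 6 * B ^ 3))) * (B * (1 * (CS ^ 6 * H ^ 3))) := by gcongr
    _ = CS ^ 12 * ρs ^ 3 * A * B ^ 4 * H ^ 3 := by ring
end
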